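/- Let H, U, Y be complex Hilbert spaces, A₁, A₂ ∈ B(H), B ∈ B(U,H), C ∈ B(H,Y), D ∈ B(U,Y), and let z, ζ ∈ ℂ with s = z + ζ and p = zζ. Suppose that both the operator I − [[A₁,A₂],[A₂,A₁]]·diag(zI_H, ζI_H) on H ⊕ H and the operator I − s·A₁ + p·(A₁ + A₂)(A₁ − A₂) on H are invertible. Then D + [C C]·diag(zI_H, ζI_H)·(I − [[A₁,A₂],[A₂,A₁]]·diag(zI_H, ζI_H))⁻¹·[B; B] = D + C·(sI − 2p·(A₁ − A₂))·(I − s·A₁ + p·(A₁ + A₂)(A₁ − A₂))⁻¹·B. -/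
import Mathlib

noncomputable section

open ContinuousLinearMap

variable {H U Y : Type*}
  [NormedAddCommGroup H] [InnerProductSpace ℂ H] [CompleteSpace H]
  [NormedAddCommGroup U] [InnerProductSpace ℂ U] [CompleteSpace U]
  [NormedAddCommGroup Y] [InnerProductSpace ℂ Y] [CompleteSpace Y]

/-- The block operator `[[A₁, A₂], [A₂, A₁]]` acting on `H ⊕ H`. -/
def symBlock (A₁ A₂ : H →L[ℂ] H) : (H × H) →L[ℂ] (H × H) :=
  (A₁.coprod A₂).prod (A₂.coprod A₁)

/-- The block diagonal operator `diag(z I_H, ζ I_H)` acting on `H ⊕ H`. -/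
def diagOp (z ζ : ℂ) : (H × H) →L[ℂ] (H × H) :=
  (z • ContinuousLinearMap.id ℂ H).prodMap (ζ • ContinuousLinearMap.id ℂ H)

theorem symTransfer_eq_gTransfer (A₁ A₂ : H →L[ℂ] H) (B : U →L[ℂ] H) (C : H →L[ℂ] Y)
    (D : U →L[ℂ] Y) (z ζ : ℂ)
    (h₁ : IsUnit (1 - symBlock A₁ A₂ * diagOp z ζ))
    (h₂ : IsUnit ((1 : H →L[ℂ] H) - (z + ζ) • A₁ + (z * ζ) • ((A₁ + A₂) * (A₁ - A₂)))) :
    D + (C.coprod C) ∘L diagOp z ζ ∘L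
        Ring.inverse (1 - symBlock A₁ A₂ * diagOp z ζ) ∘L (B.prod B) =
      D + C ∘L
          (((z + ζ) • (1 : H →L[ℂ] H) - (2 * (z * ζ)) • (A₁ - A₂)) *
            Ring.inverse
              ((1 : H →L[ℂ] H) - (z + ζ) • A₁ + (z * ζ) • ((A₁ + A₂) * (A₁ - A₂)))) ∘L
        B := by
  set E : H →L[ℂ] H := A₁ - A₂ with hE
  set N : H →L[ℂ] H :=
    (1 : H →L[ℂ] H) - (z + ζ) • A₁ + (z * ζ) • ((A₁ + A₂) * (A₁ - A₂)) with hN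
  set R : H →L[ℂ] H := Ring.inverse N with hR
  set M : (H × H) →L[ℂ] (H × H) := 1 - symBlock A₁ A₂ * diagOp z ζ with hM
  have hNR : N * R = 1 := Ring.mul_inverse_cancel _ h₂
  set X₁ : H →L[ℂ] H := ((1 : H →L[ℂ] H) - ζ • E) * R with hX₁
  set X₂ : H →L[ℂ] H := ((1 : H →L[ℂ] H) - z • E) * R with hX₂
  have key1 : X₁ - z • (A₁ * X₁) - ζ • (A₂ * X₂) = 1 := by
    have : X₁ - z • (A₁ * X₁) - ζ • (A₂ * X₂)
        = (((1 : H →L[ℂ] H) - ζ • E) - z • (A₁ * ((1 : H →L[ℂ] H) - ζ • E))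
            - ζ • (A₂ * ((1 : H →L[ℂ] H) - z • E))) * R := by
      rw [hX₁, hX₂]
      simp only [sub_mul, smul_mul_assoc, mul_assoc]
    rw [this]
    have h : (((1 : H →L[ℂ] H) - ζ • E) - z • (A₁ * ((1 : H →L[ℂ] H) - ζ • E))
            - ζ • (A₂ * ((1 : H →L[ℂ] H) - z • E))) = N := by
      rw [hN, hE]
      simp only [mul_sub, mul_one, mul_smul_comm, smul_sub, smul_smul, add_mul, sub_mul]
      module
    rw [h, hNR]
  have key2 : X₂ - z • (A₂ * X₁) - ζ • (A₁ * X₂) = 1 := by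
    have : X₂ - z • (A₂ * X₁) - ζ • (A₁ * X₂)
        = (((1 : H →L[ℂ] H) - z • E) - z • (A₂ * ((1 : H →L[ℂ] H) - ζ • E))
            - ζ • (A₁ * ((1 : H →L[ℂ] H) - z • E))) * R := by
      rw [hX₁, hX₂]
      simp only [sub_mul, smul_mul_assoc, mul_assoc]
    rw [this]
    have h : (((1 : H →L[ℂ] H) - z • E) - z • (A₂ * ((1 : H →L[ℂ] H) - ζ • E))
            - ζ • (A₁ * ((1 : H →L[ℂ] H) - z • E))) = N := by
      rw [hN, hE]
      simp only [mul_sub, mul_one, mul_smul_comm, smul_sub, smul_smul, add_mul, sub_mul]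
      module
    rw [h, hNR]
  -- column operators
  set P : H →L[ℂ] (H × H) := X₁.prod X₂ with hP
  set Q : H →L[ℂ] (H × H) := (1 : H →L[ℂ] H).prod 1 with hQ
  have hMP : M ∘L P = Q := by
    ext x
    · have := congrArg (fun T : H →L[ℂ] H => T x) key1
      simpa [hM, hP, hQ, symBlock, diagOp, ContinuousLinearMap.sub_apply,
        ContinuousLinearMap.smul_apply, mul_def, sub_add_eq_sub_sub] using this
    · have := congrArg (fun T : H →L[ℂ] H => T x) key2
      simpa [hM, hP, hQ, symBlock, diagOp, ContinuousLinearMap.sub_apply,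
        ContinuousLinearMap.smul_apply, mul_def, sub_add_eq_sub_sub] using this
  have hMinvQ : Ring.inverse M ∘L Q = P := by
    calc Ring.inverse M ∘L Q = (Ring.inverse M * M) ∘L P := by
          rw [← hMP]; rfl
      _ = P := by rw [Ring.inverse_mul_cancel _ h₁, one_def, id_comp]
  have hBB : B.prod B = Q ∘L B := by ext u <;> simp [hQ]
  have hdiagP : diagOp z ζ ∘L P = (z • X₁).prod (ζ • X₂) := by
    ext x <;> simp [diagOp, hP]
  have hCC : (C.coprod C) ∘L ((z • X₁).prod (ζ • X₂)) = C ∘L (z • X₁ + ζ • X₂) := by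
    ext x; simp
  have hfinal : z • X₁ + ζ • X₂
      = ((z + ζ) • (1 : H →L[ℂ] H) - (2 * (z * ζ)) • E) * R := by
    rw [hX₁, hX₂]
    simp only [← smul_mul_assoc, ← add_mul]
    congr 1
    simp only [smul_sub, smul_smul]
    module
  have hMinvQ2 : Ring.inverse M ∘L (Q ∘L B) = P ∘L B := by
    rw [← comp_assoc, hMinvQ]
  have hdiagP2 : diagOp z ζ ∘L (P ∘L B) = ((z • X₁).prod (ζ • X₂)) ∘L B := by
    rw [← comp_assoc, hdiagP]
  have hCC2 : (C.coprod C) ∘L (((z • X₁).prod (ζ • X₂)) ∘L B)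
      = C ∘L ((z • X₁ + ζ • X₂) ∘L B) := by
    rw [← comp_assoc, hCC, comp_assoc]
  calc D + (C.coprod C) ∘L diagOp z ζ ∘L Ring.inverse M ∘L (B.prod B)
      = D + (C.coprod C) ∘L diagOp z ζ ∘L Ring.inverse M ∘L Q ∘L B := by rw [hBB]
    _ = D + (C.coprod C) ∘L diagOp z ζ ∘L P ∘L B := by rw [hMinvQ2]
    _ = D + (C.coprod C) ∘L ((z • X₁).prod (ζ • X₂)) ∘L B := by rw [hdiagP2]
    _ = D + C ∘L (z • X₁ + ζ • X₂) ∘L B := by rw [hCC2]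
    _ = _ := by rw [hfinal]
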